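/- Let H ≤ G × G be a subspace with Goursat data E_X, E_Z, N_X, N_Z (defined by E_X = {x | ∃ z, (x,z) ∈ H}, E_Z = {z | ∃ x, (x,z) ∈ H}, N_X = {x | (x,0) ∈ H}, N_Z = {z | (0,z) ∈ H}), and let T = {x | ∃ z, (x,z) ∈ H ∩ H^ω} and W = {z | ∃ x, (x,z) ∈ H ∩ H^ω} be the external components of the stabilizer H ∩ H^ω. Say H has maximal stabilizer if T = E_X ∩ N_Z^θ and W = E_Z ∩ N_X^θ, and minimal stabilizer if T = N_X ∩ E_Z^θ and W = N_Z ∩ E_X^θ. Then H has both maximal and minimal stabilizer if and only if E_X = N_X and E_Z = N_Z (i.e., if and only if H is a direct product of two subspaces of G). -/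

import Mathlib

open Finset

/-- Orthogonal complement of a submodule with respect to a bilinear form:
`ortho ξ H = {v | ξ(v,h) = 0 for all h ∈ H}`. -/
def ortho {K V : Type*} [CommSemiring K] [AddCommMonoid V] [Module K V]
    (ξ : V →ₗ[K] V →ₗ[K] K) (H : Submodule K V) : Submodule K V :=
  ⨅ h ∈ H, LinearMap.ker (ξ.flip h)

/-- The dot product `θ(a,b) = ∑ j, a j * b j` as a bilinear form on `Fin n → ZMod p`. -/
def dotB (p n : ℕ) : (Fin n → ZMod p) →ₗ[ZMod p] (Fin n → ZMod p) →ₗ[ZMod p] ZMod p :=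
  LinearMap.mk₂ (ZMod p) (fun a b => ∑ j, a j * b j)
    (fun a a' b => by simp [add_mul, Finset.sum_add_distrib])
    (fun c a b => by simp [Finset.mul_sum, mul_assoc])
    (fun a b b' => by simp [mul_add, Finset.sum_add_distrib])
    (fun c a b => by simp [Finset.mul_sum, mul_left_comm])

/-- The symmetric form on `V × V` induced by a bilinear form `B` on `V`:
`(v,w) ↦ B v.1 w.1 + B v.2 w.2`. -/
def sumB {K V : Type*} [CommRing K] [AddCommGroup V] [Module K V]
    (B : V →ₗ[K] V →ₗ[K] K) : (V × V) →ₗ[K] (V × V) →ₗ[K] K :=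
  LinearMap.mk₂ K (fun v w => B v.1 w.1 + B v.2 w.2)
    (fun v v' w => by simp; ring)
    (fun c v w => by simp; ring)
    (fun v w w' => by simp; ring)
    (fun c v w => by simp; ring)

/-- The symplectic form on `V × V` induced by a symmetric bilinear form `B` on `V`:
`(v,w) ↦ B v.2 w.1 - B v.1 w.2`. -/
def sympB {K V : Type*} [CommRing K] [AddCommGroup V] [Module K V]
    (B : V →ₗ[K] V →ₗ[K] K) : (V × V) →ₗ[K] (V × V) →ₗ[K] K :=
  LinearMap.mk₂ K (fun v w => B v.2 w.1 - B v.1 w.2)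
    (fun v v' w => by simp; ring)
    (fun c v w => by simp; ring)
    (fun v w w' => by simp; ring)
    (fun c v w => by simp; ring)

/-!
The components of the stabilizer `H ⊓ Hᗮ` are always squeezed:
`N_X ⊓ E_Zᗮ ≤ T ≤ E_X ⊓ N_Zᗮ` and `N_Z ⊓ E_Xᗮ ≤ W ≤ E_Z ⊓ N_Xᗮ`, so a direct product
(`E_X = N_X`, `E_Z = N_Z`) has both maximal and minimal stabilizer. Conversely, for a
nondegenerate reflexive form, `dim (A ⊓ Cᗮ) + dim C = dim (C ⊓ Aᗮ) + dim A`, which turns the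
four stabilizer equalities into `dim T - dim W = dim E_X - dim N_Z = dim N_X - dim E_Z`.
Rank–nullity on the projections gives `dim E_X + dim N_Z = dim H = dim E_Z + dim N_X`, and together
with `N_X ≤ E_X`, `N_Z ≤ E_Z` this forces `N_X = E_X` and `N_Z = E_Z`.
-/

open Module LinearMap

theorem mem_ortho {K V : Type*} [CommSemiring K] [AddCommMonoid V] [Module K V]
    {B : V →ₗ[K] V →ₗ[K] K} {S : Submodule K V} {v : V} :
    v ∈ ortho B S ↔ ∀ s ∈ S, B v s = 0 := by
  simp [ortho]

theorem ortho_sup {K V : Type*} [CommSemiring K] [AddCommMonoid V] [Module K V]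
    (B : V →ₗ[K] V →ₗ[K] K) (S T : Submodule K V) :
    ortho B (S ⊔ T) = ortho B S ⊓ ortho B T := by
  ext v
  simp only [Submodule.mem_inf, mem_ortho]
  refine ⟨fun h => ⟨fun s hs => h s (Submodule.mem_sup_left hs),
    fun t ht => h t (Submodule.mem_sup_right ht)⟩, ?_⟩
  rintro ⟨hS, hT⟩ _ hst
  obtain ⟨s, hs, t, ht, rfl⟩ := Submodule.mem_sup.1 hst
  rw [map_add, hS s hs, hT t ht, add_zero]

section Goursat

variable {K V W : Type*} [Field K] [AddCommGroup V] [Module K V] [AddCommGroup W] [Module K W]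

theorem finrank_map_add_finrank_inf_ker (f : V →ₗ[K] W) (H : Submodule K V)
    [FiniteDimensional K H] :
    finrank K (H.map f) + finrank K ↥(H ⊓ ker f) = finrank K H := by
  have := (f.domRestrict H).finrank_range_add_finrank_ker
  rwa [range_domRestrict, ker_domRestrict, ← Submodule.finrank_map_subtype_eq,
    Submodule.map_comap_eq, Submodule.range_subtype] at this

theorem finrank_map_fst_add_finrank_comap_inr (H : Submodule K (V × W))
    [FiniteDimensional K H] :
    finrank K (H.map (fst K V W)) + finrank K (H.comap (inr K V W)) = finrank K H := by
  rw [← finrank_map_add_finrank_inf_ker (fst K V W) H, ker_fst, inf_comm,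
    ← Submodule.map_comap_eq,
    (Submodule.equivMapOfInjective (inr K V W) inr_injective _).finrank_eq]

theorem finrank_map_snd_add_finrank_comap_inl (H : Submodule K (V × W))
    [FiniteDimensional K H] :
    finrank K (H.map (snd K V W)) + finrank K (H.comap (inl K V W)) = finrank K H := by
  rw [← finrank_map_add_finrank_inf_ker (snd K V W) H, ker_snd, inf_comm,
    ← Submodule.map_comap_eq,
    (Submodule.equivMapOfInjective (inl K V W) inl_injective _).finrank_eq]

end Goursat

section Orthogonal

variable {K V : Type*} [Field K] [AddCommGroup V] [Module K V] {B : V →ₗ[K] V →ₗ[K] K}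

theorem ortho_eq_orthogonal (hB : B.IsRefl) (S : Submodule K V) :
    ortho B S = BilinForm.orthogonal B S := by
  ext v
  simp only [mem_ortho, BilinForm.mem_orthogonal_iff]
  exact forall₂_congr fun s _ => ⟨hB v s, hB s v⟩

variable [FiniteDimensional K V]

theorem finrank_ortho (hB : B.Nondegenerate) (hBr : B.IsRefl) (S : Submodule K V) :
    finrank K (ortho B S) = finrank K V - finrank K S := by
  rw [ortho_eq_orthogonal hBr, BilinForm.finrank_orthogonal hB]

theorem ortho_ortho (hB : B.Nondegenerate) (hBr : B.IsRefl) (S : Submodule K V) :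
    ortho B (ortho B S) = S := by
  rw [ortho_eq_orthogonal hBr, ortho_eq_orthogonal hBr, BilinForm.orthogonal_orthogonal hB hBr]

theorem finrank_inf_ortho_add_finrank (hB : B.Nondegenerate) (hBr : B.IsRefl)
    (S T : Submodule K V) :
    finrank K ↥(S ⊓ ortho B T) + finrank K T = finrank K ↥(T ⊓ ortho B S) + finrank K S := by
  have hsup := Submodule.finrank_sup_add_finrank_inf_eq S (ortho B T)
  have hT := finrank_ortho hB hBr T
  have hsup' := finrank_ortho hB hBr (S ⊔ ortho B T)
  rw [ortho_sup, ortho_ortho hB hBr, inf_comm] at hsup'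
  have := Submodule.finrank_le T
  have := Submodule.finrank_le (S ⊔ ortho B T)
  omega

end Orthogonal

section Stabilizer

variable {K V : Type*} [CommRing K] [AddCommGroup V] [Module K V] (B : V →ₗ[K] V →ₗ[K] K)
  (H : Submodule K (V × V))

theorem comap_inl_le_map_fst : H.comap (inl K V V) ≤ H.map (fst K V V) :=
  fun x hx => ⟨(x, 0), hx, rfl⟩

theorem comap_inr_le_map_snd : H.comap (inr K V V) ≤ H.map (snd K V V) :=
  fun z hz => ⟨(0, z), hz, rfl⟩

theorem map_fst_stabilizer_le :
    (H ⊓ ortho (sympB B) H).map (fst K V V)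
      ≤ H.map (fst K V V) ⊓ ortho B (H.comap (inr K V V)) := by
  rintro _ ⟨v, ⟨hvH, hvω⟩, rfl⟩
  refine ⟨⟨v, hvH, rfl⟩, mem_ortho.2 fun u hu => ?_⟩
  simpa [sympB] using mem_ortho.1 hvω (0, u) hu

theorem map_snd_stabilizer_le :
    (H ⊓ ortho (sympB B) H).map (snd K V V)
      ≤ H.map (snd K V V) ⊓ ortho B (H.comap (inl K V V)) := by
  rintro _ ⟨v, ⟨hvH, hvω⟩, rfl⟩
  refine ⟨⟨v, hvH, rfl⟩, mem_ortho.2 fun u hu => ?_⟩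
  simpa [sympB] using mem_ortho.1 hvω (u, 0) hu

theorem comap_inl_inf_ortho_le_map_fst_stabilizer :
    H.comap (inl K V V) ⊓ ortho B (H.map (snd K V V))
      ≤ (H ⊓ ortho (sympB B) H).map (fst K V V) := by
  rintro x ⟨hxH, hxω⟩
  refine ⟨(x, 0), ⟨hxH, mem_ortho.2 fun h hh => ?_⟩, rfl⟩
  simpa [sympB] using mem_ortho.1 hxω h.2 ⟨h, hh, rfl⟩

theorem comap_inr_inf_ortho_le_map_snd_stabilizer :
    H.comap (inr K V V) ⊓ ortho B (H.map (fst K V V))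
      ≤ (H ⊓ ortho (sympB B) H).map (snd K V V) := by
  rintro z ⟨hzH, hzω⟩
  refine ⟨(0, z), ⟨hzH, mem_ortho.2 fun h hh => ?_⟩, rfl⟩
  simpa [sympB] using mem_ortho.1 hzω h.1 ⟨h, hh, rfl⟩

end Stabilizer

theorem maximal_and_minimal_stabilizer_iff {K V : Type*} [Field K] [AddCommGroup V] [Module K V]
    [FiniteDimensional K V] {B : V →ₗ[K] V →ₗ[K] K} (hB : B.Nondegenerate) (hBr : B.IsRefl)
    (H : Submodule K (V × V)) :
    (((H ⊓ ortho (sympB B) H).map (fst K V V)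
        = H.map (fst K V V) ⊓ ortho B (H.comap (inr K V V)) ∧
      (H ⊓ ortho (sympB B) H).map (snd K V V)
        = H.map (snd K V V) ⊓ ortho B (H.comap (inl K V V))) ∧
     ((H ⊓ ortho (sympB B) H).map (fst K V V)
        = H.comap (inl K V V) ⊓ ortho B (H.map (snd K V V)) ∧
      (H ⊓ ortho (sympB B) H).map (snd K V V)
        = H.comap (inr K V V) ⊓ ortho B (H.map (fst K V V))))
    ↔ (H.map (fst K V V) = H.comap (inl K V V) ∧ H.map (snd K V V) = H.comap (inr K V V)) := by
  constructor
  · rintro ⟨⟨hTmax, hWmax⟩, hTmin, hWmin⟩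
    have hX := finrank_inf_ortho_add_finrank hB hBr (H.map (fst K V V)) (H.comap (inr K V V))
    have hZ := finrank_inf_ortho_add_finrank hB hBr (H.comap (inl K V V)) (H.map (snd K V V))
    rw [← hTmax, ← hWmin] at hX
    rw [← hTmin, ← hWmax] at hZ
    have := finrank_map_fst_add_finrank_comap_inr H
    have := finrank_map_snd_add_finrank_comap_inl H
    exact ⟨(Submodule.eq_of_le_of_finrank_eq (comap_inl_le_map_fst H) (by omega)).symm,
      (Submodule.eq_of_le_of_finrank_eq (comap_inr_le_map_snd H) (by omega)).symm⟩
  · rintro ⟨hX, hZ⟩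
    have hT : (H ⊓ ortho (sympB B) H).map (fst K V V)
        = H.map (fst K V V) ⊓ ortho B (H.comap (inr K V V)) :=
      (map_fst_stabilizer_le B H).antisymm <| by
        rw [hX, ← hZ]; exact comap_inl_inf_ortho_le_map_fst_stabilizer B H
    have hW : (H ⊓ ortho (sympB B) H).map (snd K V V)
        = H.map (snd K V V) ⊓ ortho B (H.comap (inl K V V)) :=
      (map_snd_stabilizer_le B H).antisymm <| by
        rw [hZ, ← hX]; exact comap_inr_inf_ortho_le_map_snd_stabilizer B H
    exact ⟨⟨hT, hW⟩, by rw [hT, hX, hZ], by rw [hW, hX, hZ]⟩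

theorem dotB_apply (p n : ℕ) (a b : Fin n → ZMod p) : dotB p n a b = a ⬝ᵥ b := rfl

theorem dotB_isRefl (p n : ℕ) : (dotB p n).IsRefl := fun a b h => by
  rwa [dotB_apply, dotProduct_comm, ← dotB_apply]

theorem dotB_nondegenerate (p n : ℕ) : (dotB p n).Nondegenerate :=
  (dotB_isRefl p n).nondegenerate_iff_separatingLeft.2 fun a h => funext fun j => by
    simpa [dotB_apply] using h (Pi.single j 1)

/-- for `H ≤ G × G` with Goursat data `E_X, E_Z, N_X, N_Z`, and
`T = {x | ∃ z, (x,z) ∈ H ∩ H^ω}`, `W = {z | ∃ x, (x,z) ∈ H ∩ H^ω}` the external components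
of the stabilizer, `H` has both maximal stabilizer (`T = E_X ∩ N_Z^θ ∧ W = E_Z ∩ N_X^θ`)
and minimal stabilizer (`T = N_X ∩ E_Z^θ ∧ W = N_Z ∩ E_X^θ`) iff `E_X = N_X ∧ E_Z = N_Z`. -/
theorem stmt15 (p n : ℕ) [Fact p.Prime]
    (H : Submodule (ZMod p) ((Fin n → ZMod p) × (Fin n → ZMod p))) :
    (((H ⊓ ortho (sympB (dotB p n)) H).map (LinearMap.fst (ZMod p) _ _)
        = H.map (LinearMap.fst (ZMod p) _ _)
            ⊓ ortho (dotB p n) (H.comap (LinearMap.inr (ZMod p) _ _)) ∧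
      (H ⊓ ortho (sympB (dotB p n)) H).map (LinearMap.snd (ZMod p) _ _)
        = H.map (LinearMap.snd (ZMod p) _ _)
            ⊓ ortho (dotB p n) (H.comap (LinearMap.inl (ZMod p) _ _))) ∧
     ((H ⊓ ortho (sympB (dotB p n)) H).map (LinearMap.fst (ZMod p) _ _)
        = H.comap (LinearMap.inl (ZMod p) _ _)
            ⊓ ortho (dotB p n) (H.map (LinearMap.snd (ZMod p) _ _)) ∧
      (H ⊓ ortho (sympB (dotB p n)) H).map (LinearMap.snd (ZMod p) _ _)
        = H.comap (LinearMap.inr (ZMod p) _ _)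
            ⊓ ortho (dotB p n) (H.map (LinearMap.fst (ZMod p) _ _))))
    ↔ (H.map (LinearMap.fst (ZMod p) _ _) = H.comap (LinearMap.inl (ZMod p) _ _) ∧
       H.map (LinearMap.snd (ZMod p) _ _) = H.comap (LinearMap.inr (ZMod p) _ _)) :=
  maximal_and_minimal_stabilizer_iff (dotB_nondegenerate p n) (dotB_isRefl p n) H
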